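/- Let L be the language with one binary function symbol s and one constant symbol 0, and let B be the L-structure with universe ℕ ∪ {∞}, with 0 interpreted as the natural number 0, and s^B(a,b) = 0 if a, b ∈ ℕ and b = a + 1, and s^B(a,b) = 1 otherwise. Then there is no primitive positive L-formula φ(x₁,…,xₙ,y) defining a function in {B} together with elements a₁,…,aₙ ∈ ℕ such that B ⊨ φ(ā, ∞). Hence the implication 'epic substructure implies primitive positive generation' fails for the class {B}, which is not closed under ultraproducts. -/

import Mathlib

open FirstOrder FirstOrder.Language

namespace EpicExample

/-- The function symbols of the language `L = {s, 0}`: a single constant symbol `zero`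
and a single binary function symbol `s`. -/
inductive Fns : ℕ → Type
  | zero : Fns 0
  | s : Fns 2

/-- The language with one binary function symbol `s` and one constant symbol `0`. -/
def Lsig : FirstOrder.Language := ⟨Fns, fun _ => Empty⟩

/-- The universe `ℕ ∪ {∞}` of the structure `B`, with `none` playing the role of `∞`. -/
abbrev OB := Option ℕ

/-- The interpretation of the binary symbol `s`:
`s(a,b) = 0` if `a, b ∈ ℕ` and `b = a + 1`, and `s(a,b) = 1` otherwise. -/
def sB : OB → OB → OB
  | some a, some b => if b = a + 1 then some 0 else some 1
  | _, _ => some 1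

instance : Lsig.Structure OB where
  funMap {_} f x :=
    match f with
    | .zero => some 0
    | .s => sB (x 0) (x 1)
  RelMap {_} r _ := r.elim

/-- A finite conjunction of atomic formulas. -/
inductive IsConjAtomic {L : FirstOrder.Language} {α : Type*} :
    ∀ {n : ℕ}, L.BoundedFormula α n → Prop
  | of_isAtomic {n : ℕ} {φ : L.BoundedFormula α n} : φ.IsAtomic → IsConjAtomic φ
  | inf {n : ℕ} {φ ψ : L.BoundedFormula α n} :
      IsConjAtomic φ → IsConjAtomic ψ → IsConjAtomic (φ ⊓ ψ)

/-- A primitive positive formula: a block of existential quantifiers in front of a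
finite conjunction of atomic formulas. -/
inductive IsPP {L : FirstOrder.Language} {α : Type*} :
    ∀ {n : ℕ}, L.BoundedFormula α n → Prop
  | of_conj {n : ℕ} {φ : L.BoundedFormula α n} : IsConjAtomic φ → IsPP φ
  | ex {n : ℕ} {φ : L.BoundedFormula α (n + 1)} : IsPP φ → IsPP φ.ex

/-!
Suppose `φ(x̄, y)` is primitive positive and `B ⊨ φ(ā, ∞)`. The finitely many witnesses of the
existential quantifiers, together with `ā`, are naturals below some bound `N`, or `∞`. On the
substructure of such elements, the map sending `∞` to `N + 3` and fixing the naturals is a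
homomorphism, and homomorphisms preserve conjunctions of atomic formulas. Hence also
`B ⊨ φ(ā, N + 3)`, so `φ` does not define a function.
-/

section HomOn

variable {L : FirstOrder.Language} {M N : Type*} [L.Structure M] [L.Structure N]

structure IsHomOn (S : L.Substructure M) (h : M → N) : Prop where
  map_fun : ∀ {n} (f : L.Functions n) (x : Fin n → M), (∀ i, x i ∈ S) →
    h (Structure.funMap f x) = Structure.funMap f (h ∘ x)
  map_rel : ∀ {n} (r : L.Relations n) (x : Fin n → M), (∀ i, x i ∈ S) →
    Structure.RelMap r x → Structure.RelMap r (h ∘ x)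

section

variable {S : L.Substructure M} {h : M → N}

theorem IsHomOn.realize_term (hh : IsHomOn S h) {β : Type*} {v : β → M} (hv : ∀ b, v b ∈ S)
    (t : L.Term β) : t.realize (h ∘ v) = h (t.realize v) := by
  induction t with
  | var b => rfl
  | func f ts ih =>
    simp only [Term.realize_func]
    rw [hh.map_fun f _ fun i => (ts i).realize_mem v hv]
    exact congrArg (Structure.funMap f) (funext ih)

theorem IsHomOn.realize_of_isConjAtomic (hh : IsHomOn S h) {α : Type*} {m : ℕ}
    {φ : L.BoundedFormula α m} (hφ : IsConjAtomic φ) {v : α → M} {xs : Fin m → M}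
    (hv : ∀ b, Sum.elim v xs b ∈ S) (hr : φ.Realize v xs) :
    φ.Realize (h ∘ v) (h ∘ xs) := by
  have hcomp : Sum.elim (h ∘ v) (h ∘ xs) = h ∘ Sum.elim v xs := (Sum.comp_elim h v xs).symm
  induction hφ with
  | of_isAtomic ha =>
    cases ha with
    | equal t₁ t₂ =>
      simp only [BoundedFormula.realize_bdEqual, hcomp, hh.realize_term hv] at hr ⊢
      rw [hr]
    | rel r ts =>
      simp only [BoundedFormula.realize_rel, hcomp, hh.realize_term hv] at hr ⊢
      exact hh.map_rel r _ (fun i => (ts i).realize_mem _ hv) hr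
  | inf _ _ ih₁ ih₂ =>
    rw [BoundedFormula.realize_inf] at hr ⊢
    exact ⟨ih₁ hr.1, ih₂ hr.2⟩

end

/-- The finitely many witnesses of `φ` eventually all lie in `S i`. -/
theorem IsPP.eventually_realize_comp {ι : Type*} {l : Filter ι} {S : ι → L.Substructure M}
    {h : ι → M → N} (hh : ∀ i, IsHomOn (S i) (h i)) (hS : ∀ x, ∀ᶠ i in l, x ∈ S i)
    {α : Type*} [Finite α] {m : ℕ} {φ : L.BoundedFormula α m} (hφ : IsPP φ)
    {v : α → M} {xs : Fin m → M} (hr : φ.Realize v xs) :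
    ∀ᶠ i in l, φ.Realize (h i ∘ v) (h i ∘ xs) := by
  induction hφ with
  | of_conj hc =>
    filter_upwards [Filter.eventually_all.2 fun b => hS (Sum.elim v xs b)] with i hi
    exact (hh i).realize_of_isConjAtomic hc hi hr
  | ex _ ih =>
    obtain ⟨w, hw⟩ := BoundedFormula.realize_ex.1 hr
    filter_upwards [ih hw] with i hi
    rw [Fin.comp_snoc] at hi
    exact BoundedFormula.realize_ex.2 ⟨h i w, hi⟩

end HomOn

def boundedPart (N : ℕ) : Lsig.Substructure OB where
  carrier := {x | ∀ k ∈ x, k ≤ N + 1}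
  fun_mem {_} f x _ := by
    cases f with
    | zero =>
      show ∀ k ∈ (some 0 : OB), k ≤ N + 1
      simp
    | s =>
      show ∀ k ∈ sB (x 0) (x 1), k ≤ N + 1
      rcases x 0 with _ | a <;> rcases x 1 with _ | b <;> simp only [sB] <;> (try split) <;> simp

@[simp]
theorem mem_boundedPart {N : ℕ} {x : OB} : x ∈ boundedPart N ↔ ∀ k ∈ x, k ≤ N + 1 :=
  Iff.rfl

theorem eventually_mem_boundedPart (x : OB) : ∀ᶠ N in Filter.atTop, x ∈ boundedPart N := by
  filter_upwards [Filter.eventually_ge_atTop (x.getD 0)] with N hN k hk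
  rw [Option.mem_def] at hk
  subst hk
  exact Nat.le_succ_of_le hN

def replaceInfinity (m : ℕ) (x : OB) : OB := some (x.getD m)

/-- On `boundedPart N` this map creates no new pair with `s(a, b) = 0` (that would need
`a = N + 2`), and it fixes the values of `s`, which are `0` or `1`. -/
theorem isHomOn_replaceInfinity (N : ℕ) :
    IsHomOn (boundedPart N) (replaceInfinity (N + 3)) where
  map_fun {_} f x hx := by
    cases f with
    | zero => rfl
    | s =>
      show replaceInfinity (N + 3) (sB (x 0) (x 1)) =
        sB (replaceInfinity (N + 3) (x 0)) (replaceInfinity (N + 3) (x 1))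
      have h0 := hx 0
      have h1 := hx 1
      revert h0 h1
      rcases x 0 with _ | a <;> rcases x 1 with _ | b <;>
        simp [replaceInfinity, sB] <;> (try split_ifs) <;> intros <;> first | rfl | omega
  map_rel r := r.elim

/-- Example 7, continued.  There is no primitive positive formula
`φ(x₁,…,xₙ,y)` defining a function in the class `{B}`, together with parameters
`a₁,…,aₙ ∈ ℕ`, such that `B ⊨ φ(ā, ∞)`.  Hence the implication "epic substructure ⇒
primitive positive generation" fails for `{B}`, a class not closed under
ultraproducts. -/
theorem no_pp_formula_defines_infinity :
    ¬ ∃ (n : ℕ) (φ : Lsig.Formula (Fin (n + 1))) (a : Fin n → ℕ),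
        IsPP φ ∧
        (∀ (v : Fin n → OB) (y z : OB),
          φ.Realize (Fin.snoc v y) → φ.Realize (Fin.snoc v z) → y = z) ∧
        φ.Realize (Fin.snoc (fun i => (some (a i) : OB)) (none : OB)) := by
  rintro ⟨n, φ, a, hφ, hfun, hreal⟩
  obtain ⟨N, hN⟩ := (hφ.eventually_realize_comp isHomOn_replaceInfinity
    eventually_mem_boundedPart hreal).exists
  have himage : replaceInfinity (N + 3) ∘ Fin.snoc (fun i => (some (a i) : OB)) none =
      Fin.snoc (fun i => (some (a i) : OB)) (some (N + 3)) := by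
    rw [Fin.comp_snoc]
    rfl
  have hN' : φ.Realize (Fin.snoc (fun i => (some (a i) : OB)) (some (N + 3))) := by
    rw [himage] at hN
    unfold Formula.Realize
    convert hN using 1
  exact Option.some_ne_none _ (hfun _ _ _ hreal hN').symm

end EpicExample
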